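/- arXiv:2006.13868 — 4 statements merged into one kernel-verified Lean document; each statement's English description precedes it below -/
import Mathlib

section
/- Let θ ~ χ²_1 and let c > 0 be a constant. Then E[√(c + θ)] = √2 · U(-1/2, 0, c/2), where U(a,b,z) is Tricomi's confluent hypergeometric function. -/
open MeasureTheory Real Set

/-- Tricomi's confluent hypergeometric function `U(a,b,z)`, defined by its integral
representation for `a > 0` and extended via Kummer's relation
`U(a,b,z) = z^(1-b) U(a-b+1, 2-b, z)` otherwise. -/
noncomputable def tricomiU (a b z : ℝ) : ℝ :=
  if 0 < a then
    (Gamma a)⁻¹ * ∫ t in Ioi (0:ℝ), Real.exp (-(z * t)) * t ^ (a - 1) * (1 + t) ^ (b - a - 1)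
  else
    z ^ (1 - b) *
      ((Gamma (a - b + 1))⁻¹ *
        ∫ t in Ioi (0:ℝ), Real.exp (-(z * t)) * t ^ (a - b) * (1 + t) ^ (-a))

/-! The substitution `θ = (c/2) t` turns `U(-1/2, 0, c/2)` into the integral
`Γ(1/2)⁻¹ ∫₀^∞ e^{-θ} θ^{-1/2} (c/2 + θ)^{1/2} dθ`, and the substitution `θ = 2s` turns the
χ²₁ expectation into `√2 / √π` times the same integral; `Γ(1/2) = √π` finishes. -/

lemma exp_neg_mul_rpow_mul_add_rpow_comp_mul {z t : ℝ} (hz : 0 < z) (ht : 0 ≤ t) (p q : ℝ) :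
    exp (-(z * t)) * (z * t) ^ p * (z + z * t) ^ q =
      z ^ (p + q) * (exp (-(z * t)) * t ^ p * (1 + t) ^ q) := by
  rw [show z + z * t = z * (1 + t) by ring, mul_rpow hz.le ht, mul_rpow hz.le (by linarith),
    rpow_add hz]
  ring

theorem tricomiU_eq_integral_of_nonpos {a : ℝ} (b : ℝ) {z : ℝ} (ha : a ≤ 0) (hz : 0 < z) :
    tricomiU a b z =
      (Gamma (a - b + 1))⁻¹ * ∫ θ in Ioi 0, exp (-θ) * θ ^ (a - b) * (z + θ) ^ (-a) := by
  have hscale := integral_comp_mul_left_Ioi'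
    (fun θ => exp (-θ) * θ ^ (a - b) * (z + θ) ^ (-a)) 0 hz
  rw [mul_zero] at hscale
  rw [tricomiU, if_neg ha.not_gt, ← hscale, setIntegral_congr_fun measurableSet_Ioi
    fun t ht => exp_neg_mul_rpow_mul_add_rpow_comp_mul hz (le_of_lt ht) (a - b) (-a),
    integral_const_mul, smul_eq_mul, show 1 - b = 1 + (a - b + -a) by ring, rpow_add hz, rpow_one]
  ring

lemma sqrt_add_mul_chiSq_density_comp_two_mul {c s : ℝ} (hs : 0 ≤ s) :
    √(c + 2 * s) * ((2 * π * (2 * s)) ^ (-(1:ℝ)/2) * exp (-(2 * s)/2)) =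
      √2 / (2 * √π) * (exp (-s) * s ^ (-(1:ℝ)/2) * (c/2 + s) ^ ((1:ℝ)/2)) := by
  have hsqrt : √(c + 2 * s) = √2 * (c/2 + s) ^ ((1:ℝ)/2) := by
    rw [← sqrt_eq_rpow, ← sqrt_mul zero_le_two]; ring_nf
  have hdens : (2 * π * (2 * s)) ^ (-(1:ℝ)/2) = (2 * √π)⁻¹ * s ^ (-(1:ℝ)/2) := by
    rw [show 2 * π * (2 * s) = (2 * √π) ^ (2:ℝ) * s by
      rw [rpow_two, mul_pow, sq_sqrt pi_pos.le]; ring,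
      mul_rpow (by positivity) hs, ← rpow_mul (by positivity),
      show (2:ℝ) * (-1/2) = -1 by norm_num, rpow_neg_one]
  rw [hsqrt, hdens, show -(2 * s)/2 = -s by ring]
  ring

/-- If θ ~ χ²₁ and c > 0, then E[√(c+θ)] = √2 · U(-1/2, 0, c/2). -/
theorem chisq_sqrt_shift_mean (c : ℝ) (hc : 0 < c) :
    (∫ θ in Ioi (0:ℝ),
        Real.sqrt (c + θ) * ((2 * π * θ) ^ (-(1:ℝ)/2) * Real.exp (-θ/2))) =
      Real.sqrt 2 * tricomiU (-(1/2)) 0 (c/2) := by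
  have hscale := integral_comp_mul_left_Ioi'
    (fun θ => √(c + θ) * ((2 * π * θ) ^ (-(1:ℝ)/2) * exp (-θ/2))) 0 two_pos
  rw [mul_zero] at hscale
  rw [tricomiU_eq_integral_of_nonpos 0 (by norm_num) (by positivity), ← hscale,
    setIntegral_congr_fun measurableSet_Ioi
      fun s hs => sqrt_add_mul_chiSq_density_comp_two_mul (c := c) (le_of_lt hs),
    integral_const_mul, smul_eq_mul, show -(1/2 : ℝ) - 0 + 1 = 1/2 by norm_num,
    Gamma_one_half_eq]
  norm_num
  field_simp
end

section
/- Let θ ~ χ²_1 and c > 0. Then Var[√(c + θ)] = c + 1 - 2·U(-1/2, 0, c/2)², where U is Tricomi's confluent hypergeometric function. -/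
open MeasureTheory Real Set

/-!
The moments of `θ ~ χ²₁` are `E[θ^s] = 2^s Γ(s + 1/2) / √π`, so `E[c + θ] = c + 1`.
The substitution `θ = c t` turns `E[√(c + θ)]` into `√2` times the integral defining
`U(-1/2, 0, c/2)` through Kummer's relation.
-/

noncomputable def chiSqOnePDF (θ : ℝ) : ℝ := (2 * π * θ) ^ (-(1:ℝ)/2) * exp (-θ/2)

lemma rpow_mul_chiSqOnePDF {θ : ℝ} (hθ : 0 < θ) (s : ℝ) :
    θ ^ s * chiSqOnePDF θ = (2 * π) ^ (-(1:ℝ)/2) * (θ ^ (s + 1/2 - 1) * exp (-(1/2 * θ))) := by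
  rw [chiSqOnePDF, mul_rpow (by positivity) hθ.le, show s + 1/2 - 1 = s + (-(1:ℝ)/2) by ring,
    rpow_add hθ]
  ring_nf

lemma integrableOn_rpow_mul_chiSqOnePDF {s : ℝ} (hs : -1/2 < s) :
    IntegrableOn (fun θ ↦ θ ^ s * chiSqOnePDF θ) (Ioi 0) := by
  have hΓ : IntegrableOn (fun θ : ℝ ↦ θ ^ (s + 1/2 - 1) * exp (-(1/2) * θ ^ (1:ℝ))) (Ioi 0) :=
    integrableOn_rpow_mul_exp_neg_mul_rpow (by linarith) one_pos (by norm_num)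
  refine IntegrableOn.congr_fun (hΓ.const_mul ((2 * π) ^ (-(1:ℝ)/2))) (fun θ hθ ↦ ?_)
    measurableSet_Ioi
  rw [rpow_mul_chiSqOnePDF hθ, rpow_one, neg_mul]

lemma integral_rpow_mul_chiSqOnePDF {s : ℝ} (hs : -1/2 < s) :
    ∫ θ in Ioi 0, θ ^ s * chiSqOnePDF θ = 2 ^ s * Gamma (s + 1/2) / √π := by
  rw [setIntegral_congr_fun measurableSet_Ioi (fun θ hθ ↦ rpow_mul_chiSqOnePDF hθ s),
    integral_const_mul, integral_rpow_mul_exp_neg_mul_Ioi (by linarith) (by norm_num),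
    mul_rpow two_pos.le pi_pos.le, one_div_one_div, rpow_add two_pos, sqrt_eq_rpow,
    show (-(1:ℝ)/2) = -(1/2) by ring, rpow_neg two_pos.le, rpow_neg pi_pos.le]
  have : (0:ℝ) < 2 ^ (1/2:ℝ) := by positivity
  field_simp

lemma integral_chiSqOnePDF : ∫ θ in Ioi 0, chiSqOnePDF θ = 1 := by
  have h := integral_rpow_mul_chiSqOnePDF (s := 0) (by norm_num)
  rw [zero_add, Gamma_one_half_eq] at h
  have : 0 < √π := by positivity
  simpa [field] using h

lemma integral_mul_chiSqOnePDF : ∫ θ in Ioi 0, θ * chiSqOnePDF θ = 1 := by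
  have h := integral_rpow_mul_chiSqOnePDF (s := 1) (by norm_num)
  rw [show (1:ℝ) + 1/2 = 1/2 + 1 by norm_num, Gamma_add_one (by norm_num), Gamma_one_half_eq] at h
  have : 0 < √π := by positivity
  simpa [field] using h

lemma integral_add_mul_chiSqOnePDF (c : ℝ) :
    ∫ θ in Ioi 0, (c + θ) * chiSqOnePDF θ = c + 1 := by
  have h0 := integrableOn_rpow_mul_chiSqOnePDF (s := 0) (by norm_num)
  have h1 := integrableOn_rpow_mul_chiSqOnePDF (s := 1) (by norm_num)
  simp only [rpow_zero, one_mul, rpow_one] at h0 h1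
  simp_rw [add_mul]
  rw [integral_add (h0.const_mul c) h1, integral_const_mul, integral_chiSqOnePDF,
    integral_mul_chiSqOnePDF, mul_one]

lemma tricomiU_neg_half_zero (z : ℝ) :
    tricomiU (-(1/2)) 0 z =
      z / √π * ∫ t in Ioi 0, exp (-(z * t)) * t ^ (-(1:ℝ)/2) * (1 + t) ^ ((1:ℝ)/2) := by
  rw [tricomiU, if_neg (by norm_num)]
  norm_num [Gamma_one_half_eq]
  ring

lemma sqrt_add_mul_mul_chiSqOnePDF_mul {c t : ℝ} (hc : 0 < c) (ht : 0 < t) :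
    √(c + c * t) * chiSqOnePDF (c * t) =
      (2 * π) ^ (-(1:ℝ)/2) * (exp (-(c / 2 * t)) * t ^ (-(1:ℝ)/2) * (1 + t) ^ ((1:ℝ)/2)) := by
  have hsqrt_mul_rpow : √c * c ^ (-(1:ℝ)/2) = 1 := by
    rw [sqrt_eq_rpow, ← rpow_add hc]; norm_num
  rw [chiSqOnePDF, show c + c * t = c * (1 + t) by ring, sqrt_mul hc.le, ← sqrt_eq_rpow,
    show 2 * π * (c * t) = 2 * π * c * t by ring, mul_rpow (by positivity) ht.le,
    mul_rpow (by positivity) hc.le, show -(c * t) / 2 = -(c / 2 * t) by ring]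
  linear_combination
    (2 * π) ^ (-(1:ℝ)/2) * (exp (-(c / 2 * t)) * t ^ (-(1:ℝ)/2) * √(1 + t)) * hsqrt_mul_rpow

lemma integral_sqrt_add_mul_chiSqOnePDF {c : ℝ} (hc : 0 < c) :
    ∫ θ in Ioi 0, √(c + θ) * chiSqOnePDF θ = √2 * tricomiU (-(1/2)) 0 (c/2) := by
  have hsubst := integral_comp_mul_left_Ioi' (fun θ ↦ √(c + θ) * chiSqOnePDF θ) 0 hc
  rw [mul_zero] at hsubst
  rw [← hsubst, smul_eq_mul,
    setIntegral_congr_fun measurableSet_Ioi (fun t ht ↦ sqrt_add_mul_mul_chiSqOnePDF_mul hc ht),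
    integral_const_mul, tricomiU_neg_half_zero, mul_rpow two_pos.le pi_pos.le,
    show (-(1:ℝ)/2) = -(1/2) by ring, rpow_neg two_pos.le, rpow_neg pi_pos.le,
    ← sqrt_eq_rpow, ← sqrt_eq_rpow]
  have : 0 < √2 := by positivity
  field_simp
  rw [sq_sqrt zero_le_two]

/-- If θ ~ χ²₁ and c > 0, then Var[√(c+θ)] = c + 1 - 2·U(-1/2,0,c/2)². -/
theorem chisq_sqrt_shift_var (c : ℝ) (hc : 0 < c) :
    (∫ θ in Ioi (0:ℝ), (c + θ) * ((2 * π * θ) ^ (-(1:ℝ)/2) * Real.exp (-θ/2))) -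
      (∫ θ in Ioi (0:ℝ),
        Real.sqrt (c + θ) * ((2 * π * θ) ^ (-(1:ℝ)/2) * Real.exp (-θ/2))) ^ 2 =
      c + 1 - 2 * (tricomiU (-(1/2)) 0 (c/2)) ^ 2 := by
  change (∫ θ in Ioi 0, (c + θ) * chiSqOnePDF θ) - (∫ θ in Ioi 0, √(c + θ) * chiSqOnePDF θ) ^ 2 = _
  rw [integral_add_mul_chiSqOnePDF, integral_sqrt_add_mul_chiSqOnePDF hc, mul_pow,
    sq_sqrt zero_le_two]
end

section
/- If X ~ Gamma(α, λ) and, independently, η ~ Beta(βα, (1-β)α) with 0 < β < 1, then ηX ~ Gamma(βα, λ). -/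
/-!
Given `X = x ≠ 0`, the product `ηX` has density `|x|⁻¹ β(y / x)`, so `ηX` has density
`y ↦ ∫ |x|⁻¹ β(y / x) dGamma(a + b, λ)(x)` with `a = βα`, `b = (1 - β)α`. For `y > 0` the shift
`x = y + v` turns the integrand into `C y^(a-1) e^(-λy) · v^(b-1) e^(-λv)` on `v > 0`, and the
`v`-integral `Γ(b) / λ^b` leaves exactly the Gamma(a, λ) density.
-/

open MeasureTheory Real ProbabilityTheory

/-- The Beta(a,b) distribution on ℝ, with density
x^(a-1)(1-x)^(b-1)·Γ(a+b)/(Γ(a)Γ(b)) on (0,1). -/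
noncomputable def betaMeasure' (a b : ℝ) : Measure ℝ :=
  volume.withDensity fun x =>
    ENNReal.ofReal
      (if x ∈ Set.Ioo (0:ℝ) 1 then
        x ^ (a - 1) * (1 - x) ^ (b - 1) * Gamma (a + b) / (Gamma a * Gamma b)
      else 0)

open Set

@[fun_prop]
theorem measurable_betaPDF (a b : ℝ) : Measurable (betaPDF a b) :=
  (measurable_betaPDFReal a b).ennreal_ofReal

@[fun_prop]
theorem measurable_gammaPDF (a r : ℝ) : Measurable (gammaPDF a r) :=
  (measurable_gammaPDFReal a r).ennreal_ofReal

theorem betaMeasure'_eq_betaMeasure (a b : ℝ) : betaMeasure' a b = betaMeasure a b := by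
  unfold betaMeasure' betaMeasure
  congr 1
  funext x
  simp only [betaPDF_eq, mem_Ioo, beta, one_div_div]
  congr 1
  split_ifs <;> ring

theorem map_mul_const_withDensity_volume {f : ℝ → ENNReal} (hf : Measurable f) {c : ℝ}
    (hc : c ≠ 0) :
    (volume.withDensity f).map (· * c) =
      volume.withDensity fun y => ENNReal.ofReal |c⁻¹| * f (y / c) := by
  ext s hs
  have hs' : MeasurableSet ((· * c) ⁻¹' s) := measurable_mul_const c hs
  have hg : Measurable fun y => ENNReal.ofReal |c⁻¹| * f (y / c) :=
    (hf.comp (measurable_div_const c)).const_mul _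
  rw [Measure.map_apply (measurable_mul_const c) hs, withDensity_apply _ hs,
    withDensity_apply _ hs', ← lintegral_indicator hs, ← lintegral_indicator hs']
  conv_rhs => rw [← Real.smul_map_volume_mul_right hc, lintegral_smul_measure,
    lintegral_map (hg.indicator hs) (measurable_mul_const c), smul_eq_mul,
    ← lintegral_const_mul' _ _ ENNReal.ofReal_ne_top]
  congr 1
  funext x
  by_cases hx : x * c ∈ s
  · rw [indicator_of_mem hx, indicator_of_mem (show x ∈ (· * c) ⁻¹' s from hx), ← mul_assoc,
      ← ENNReal.ofReal_mul (abs_nonneg c), ← abs_mul, mul_inv_cancel₀ hc, abs_one,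
      ENNReal.ofReal_one, one_mul, mul_div_cancel_right₀ x hc]
  · rw [indicator_of_notMem hx, indicator_of_notMem (show x ∉ (· * c) ⁻¹' s from hx), mul_zero]

theorem map_mul_withDensity_volume_prod {f : ℝ → ENNReal} (hf : Measurable f) (ν : Measure ℝ)
    [SFinite ν] (hν : ∀ᵐ x ∂ν, x ≠ 0) :
    ((volume.withDensity f).prod ν).map (fun p => p.1 * p.2) =
      volume.withDensity fun y => ∫⁻ x, ENNReal.ofReal |x⁻¹| * f (y / x) ∂ν := by
  have hmul : Measurable fun p : ℝ × ℝ => p.1 * p.2 := measurable_fst.mul measurable_snd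
  ext s hs
  rw [Measure.map_apply hmul hs, Measure.prod_apply_symm (hmul hs), withDensity_apply _ hs,
    lintegral_lintegral_swap (by fun_prop)]
  refine lintegral_congr_ae ?_
  filter_upwards [hν] with x hx
  rw [← withDensity_apply _ hs, ← map_mul_const_withDensity_volume hf hx,
    Measure.map_apply (measurable_mul_const x) hs]
  rfl

theorem lintegral_rpow_mul_exp_neg_mul_Ioi {b r : ℝ} (hb : 0 < b) (hr : 0 < r) :
    ∫⁻ v in Ioi 0, ENNReal.ofReal (v ^ (b - 1) * exp (-(r * v))) =
      ENNReal.ofReal (Gamma b / r ^ b) := by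
  have hint : IntegrableOn (fun v : ℝ => v ^ (b - 1) * exp (-(r * v))) (Ioi 0) :=
    (integrableOn_rpow_mul_exp_neg_mul_rpow (s := b - 1) (by linarith) one_pos hr).congr_fun
      (fun v _ => by simp only [rpow_one, neg_mul]) measurableSet_Ioi
  have hnonneg : 0 ≤ᵐ[volume.restrict (Ioi 0)] fun v : ℝ => v ^ (b - 1) * exp (-(r * v)) :=
    ae_restrict_of_forall_mem measurableSet_Ioi fun v (hv : 0 < v) => by positivity
  rw [← ofReal_integral_eq_lintegral_ofReal hint hnonneg, integral_rpow_mul_exp_neg_mul_Ioi hb hr,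
    div_rpow zero_le_one hr.le, one_rpow, one_div_mul_eq_div]

theorem gammaPDF_add_mul_betaPDF_div {a b r y : ℝ} (ha : 0 < a) (hb : 0 < b) (hr : 0 < r)
    (hy : 0 < y) (v : ℝ) :
    gammaPDF (a + b) r (v + y) * (ENNReal.ofReal |(v + y)⁻¹| * betaPDF a b (y / (v + y))) =
      (Ioi 0).indicator (fun v => ENNReal.ofReal
        (r ^ (a + b) / (Gamma a * Gamma b) * y ^ (a - 1) * exp (-(r * y))) *
          ENNReal.ofReal (v ^ (b - 1) * exp (-(r * v)))) v := by
  rcases le_or_gt v 0 with hv | hv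
  · have hbeta : betaPDF a b (y / (v + y)) = 0 := by
      rcases le_or_gt (v + y) 0 with hw | hw
      · exact betaPDF_eq_zero_of_nonpos (div_nonpos_of_nonneg_of_nonpos hy.le hw)
      · exact betaPDF_eq_zero_of_one_le ((one_le_div hw).2 (by linarith))
    rw [hbeta, mul_zero, mul_zero, indicator_of_notMem (show v ∉ Ioi 0 from not_lt.2 hv)]
  have hw : 0 < v + y := by linarith
  have hΓa := Gamma_pos_of_pos ha
  have hΓb := Gamma_pos_of_pos hb
  have hΓab := Gamma_pos_of_pos (add_pos ha hb)
  have hsplit : (v + y) ^ (a + b - 1) = (v + y) ^ (a - 1) * (v + y) ^ (b - 1) * (v + y) := by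
    rw [← rpow_add hw, ← rpow_add_one hw.ne']
    ring_nf
  have hcompl : 1 - y / (v + y) = v / (v + y) := by field_simp; ring
  rw [indicator_of_mem (show v ∈ Ioi 0 from hv), gammaPDF_of_nonneg hw.le,
    betaPDF_of_pos_lt_one (div_pos hy hw) ((div_lt_one hw).2 (by linarith)),
    ← ENNReal.ofReal_mul (abs_nonneg _), ← ENNReal.ofReal_mul (by positivity),
    ← ENNReal.ofReal_mul (by positivity)]
  congr 1
  rw [hcompl, div_rpow hy.le hw.le, div_rpow hv.le hw.le, hsplit, abs_of_pos (inv_pos.2 hw),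
    show -(r * (v + y)) = -(r * y) + -(r * v) by ring, exp_add, beta]
  field_simp

theorem lintegral_betaPDF_div_gammaMeasure_of_nonpos (a b c r : ℝ) {y : ℝ} (hy : y ≤ 0) :
    ∫⁻ x, ENNReal.ofReal |x⁻¹| * betaPDF a b (y / x) ∂gammaMeasure c r = 0 := by
  rw [gammaMeasure,
    lintegral_withDensity_eq_lintegral_mul _ (measurable_gammaPDF _ r) (by fun_prop)]
  refine (lintegral_congr fun x => ?_).trans lintegral_zero
  rcases lt_or_ge x 0 with hx | hx
  · rw [Pi.mul_apply, gammaPDF_of_neg hx, zero_mul]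
  · rw [Pi.mul_apply, betaPDF_eq_zero_of_nonpos (div_nonpos_of_nonpos_of_nonneg hy hx), mul_zero,
      mul_zero]

theorem lintegral_betaPDF_div_gammaMeasure {a b r y : ℝ} (ha : 0 < a) (hb : 0 < b) (hr : 0 < r)
    (hy : 0 < y) :
    ∫⁻ x, ENNReal.ofReal |x⁻¹| * betaPDF a b (y / x) ∂gammaMeasure (a + b) r = gammaPDF a r y := by
  rw [gammaMeasure,
    lintegral_withDensity_eq_lintegral_mul _ (measurable_gammaPDF _ r) (by fun_prop),
    ← lintegral_add_right_eq_self _ y]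
  simp only [Pi.mul_apply, gammaPDF_add_mul_betaPDF_div ha hb hr hy]
  rw [lintegral_indicator measurableSet_Ioi, lintegral_const_mul' _ _ ENNReal.ofReal_ne_top,
    lintegral_rpow_mul_exp_neg_mul_Ioi hb hr, ← ENNReal.ofReal_mul (by positivity),
    gammaPDF_of_nonneg hy.le]
  congr 1
  rw [rpow_add hr]
  field_simp

theorem map_mul_betaMeasure_prod_gammaMeasure {a b r : ℝ} (ha : 0 < a) (hb : 0 < b)
    (hr : 0 < r) :
    ((betaMeasure a b).prod (gammaMeasure (a + b) r)).map (fun p => p.1 * p.2) =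
      gammaMeasure a r := by
  have := isProbabilityMeasure_gammaMeasure (add_pos ha hb) hr
  have hne : ∀ᵐ x ∂gammaMeasure (a + b) r, x ≠ 0 :=
    (withDensity_absolutelyContinuous _ _).ae_le (Measure.ae_ne volume 0)
  rw [betaMeasure, map_mul_withDensity_volume_prod (measurable_betaPDF a b) _ hne]
  conv_rhs => rw [gammaMeasure]
  refine withDensity_congr_ae ?_
  filter_upwards [Measure.ae_ne volume 0] with y hy
  rcases hy.lt_or_gt with hneg | hpos
  · rw [lintegral_betaPDF_div_gammaMeasure_of_nonpos a b _ r hneg.le, gammaPDF_of_neg hneg]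
  · exact lintegral_betaPDF_div_gammaMeasure ha hb hr hpos

/-- Beta-gamma multiplication identity: if X ~ Gamma(α, λ) and independently
η ~ Beta(βα, (1-β)α) with 0 < β < 1, then ηX ~ Gamma(βα, λ). -/
theorem beta_gamma_product {Ω : Type*} [MeasurableSpace Ω]
    (μ : Measure Ω) [IsProbabilityMeasure μ]
    (X η : Ω → ℝ) (hX : Measurable X) (hη : Measurable η)
    (α lam β : ℝ) (hα : 0 < α) (hlam : 0 < lam) (hβ0 : 0 < β) (hβ1 : β < 1)
    (hind : IndepFun X η μ)
    (hXd : μ.map X = gammaMeasure α lam)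
    (hηd : μ.map η = betaMeasure' (β * α) ((1 - β) * α)) :
    μ.map (fun ω => η ω * X ω) = gammaMeasure (β * α) lam := by
  have hjoint : μ.map (fun ω => (η ω, X ω)) =
      (betaMeasure (β * α) ((1 - β) * α)).prod (gammaMeasure α lam) := by
    rw [← betaMeasure'_eq_betaMeasure, ← hηd, ← hXd]
    exact hind.symm.map_prod_eq_prod_map_map hη.aemeasurable hX.aemeasurable
  have hproduct := map_mul_betaMeasure_prod_gammaMeasure (mul_pos hβ0 hα)
    (mul_pos (sub_pos.2 hβ1) hα) hlam
  rw [show β * α + (1 - β) * α = α by ring] at hproduct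
  calc μ.map (fun ω => η ω * X ω)
      = (μ.map fun ω => (η ω, X ω)).map fun p => p.1 * p.2 :=
        (Measure.map_map (measurable_fst.mul measurable_snd) (hη.prodMk hX)).symm
    _ = gammaMeasure (β * α) lam := by
        rw [hjoint, hproduct]
end

section
/- Let P_t, P_{t-1} be upper-triangular q×q matrices with positive diagonals and let U* be upper-triangular with positive diagonal. If Φ = (U* P_t)ᵀ(U* P_t) and we define Ũ = uchol(b (P_{t-1}^{-1})ᵀ Φ P_{t-1}^{-1}) for b > 0, then Ũ = √b · U* P_t P_{t-1}^{-1}, provided U* P_t P_{t-1}^{-1} has positive diagonal. -/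
open MeasureTheory Real ProbabilityTheory Matrix
open scoped Classical

noncomputable instance matrixMeasureSpace {m n : Type*} [Fintype m] [Fintype n]
    {α : Type*} [MeasureSpace α] [SigmaFinite (volume : Measure α)] :
    MeasureSpace (Matrix m n α) :=
  show MeasureSpace (m → n → α) from inferInstance

/-- The multivariate gamma function Γ_q(a). -/
noncomputable def multivariateGamma (q : ℕ) (a : ℝ) : ℝ :=
  π ^ ((q : ℝ) * ((q : ℝ) - 1) / 4) * ∏ i ∈ Finset.range q, Gamma (a - i / 2)

/-- Density of the Wishart_q(h, S) distribution (scale S) with respect to Lebesgue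
measure on q×q matrices, supported on positive-definite matrices. -/
noncomputable def wishartPDFReal (q : ℕ) (h : ℝ) (S A : Matrix (Fin q) (Fin q) ℝ) : ℝ :=
  if A.PosDef then
    (2 : ℝ) ^ (-(h * q) / 2) * S.det ^ (-h / 2) / multivariateGamma q (h / 2) *
      A.det ^ ((h - q - 1) / 2) * Real.exp (-(S⁻¹ * A).trace / 2)
  else 0

/-- The Wishart_q(h, S) measure on q×q real matrices. -/
noncomputable def wishartMeasure (q : ℕ) (h : ℝ) (S : Matrix (Fin q) (Fin q) ℝ) :
    Measure (Matrix (Fin q) (Fin q) ℝ) :=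
  volume.withDensity fun A => ENNReal.ofReal (wishartPDFReal q h S A)

/-- The upper-triangular Cholesky factor with positive diagonal of a symmetric
positive-definite matrix (0 if none exists). -/
noncomputable def uchol {q : ℕ} (A : Matrix (Fin q) (Fin q) ℝ) :
    Matrix (Fin q) (Fin q) ℝ :=
  if h : ∃ P : Matrix (Fin q) (Fin q) ℝ,
      (∀ i j : Fin q, j < i → P i j = 0) ∧ (∀ i : Fin q, 0 < P i i) ∧ Pᵀ * P = A
  then h.choose else 0


section Aux
variable {q : ℕ}

lemma diag_mul_tri {A B : Matrix (Fin q) (Fin q) ℝ}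
    (hA : ∀ i j : Fin q, j < i → A i j = 0) (hB : ∀ i j : Fin q, j < i → B i j = 0)
    (i : Fin q) : (A * B) i i = A i i * B i i := by
  rw [Matrix.mul_apply]
  refine Finset.sum_eq_single i (fun k _ hk => ?_) (by simp)
  rcases lt_or_gt_of_ne hk with h | h
  · rw [hA i k h, zero_mul]
  · rw [hB k i h, mul_zero]

lemma tri_invertible {A : Matrix (Fin q) (Fin q) ℝ}
    (hA : ∀ i j : Fin q, j < i → A i j = 0) (hAd : ∀ i : Fin q, 0 < A i i) :
    IsUnit A.det := by
  rw [Matrix.det_of_upperTriangular (fun i j h => hA i j h)]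
  exact (Finset.prod_pos (fun i _ => hAd i)).ne'.isUnit

lemma tri_inv_tri {A : Matrix (Fin q) (Fin q) ℝ}
    (hA : ∀ i j : Fin q, j < i → A i j = 0) (hAd : ∀ i : Fin q, 0 < A i i) :
    ∀ i j : Fin q, j < i → A⁻¹ i j = 0 := by
  haveI := A.invertibleOfIsUnitDet (tri_invertible hA hAd)
  exact fun i j h => blockTriangular_inv_of_blockTriangular (fun i j hh => hA i j hh) h

lemma tri_inv_diag_pos {A : Matrix (Fin q) (Fin q) ℝ}
    (hA : ∀ i j : Fin q, j < i → A i j = 0) (hAd : ∀ i : Fin q, 0 < A i i) :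
    ∀ i : Fin q, 0 < A⁻¹ i i := by
  intro i
  have h1 : (A * A⁻¹) i i = 1 := by
    rw [Matrix.mul_nonsing_inv A (tri_invertible hA hAd)]; simp
  rw [diag_mul_tri hA (tri_inv_tri hA hAd)] at h1
  nlinarith [hAd i]

lemma chol_unique {P Q : Matrix (Fin q) (Fin q) ℝ}
    (hP : ∀ i j : Fin q, j < i → P i j = 0) (hPd : ∀ i : Fin q, 0 < P i i)
    (hQ : ∀ i j : Fin q, j < i → Q i j = 0) (hQd : ∀ i : Fin q, 0 < Q i i)
    (h : Pᵀ * P = Qᵀ * Q) : P = Q := by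
  have hPu : IsUnit P.det := tri_invertible hP hPd
  have hQu : IsUnit Q.det := tri_invertible hQ hQd
  set T := Q * P⁻¹ with hT
  have hTu : ∀ i j : Fin q, j < i → T i j = 0 :=
    fun i j hij => (BlockTriangular.mul (fun i j h => hQ i j h)
      (fun i j h => tri_inv_tri hP hPd i j h)) hij
  have hTd : ∀ i : Fin q, 0 < T i i := by
    intro i
    rw [hT, diag_mul_tri hQ (tri_inv_tri hP hPd)]
    exact mul_pos (hQd i) (tri_inv_diag_pos hP hPd i)
  have horth : Tᵀ * T = 1 := by
    rw [hT, transpose_mul, transpose_nonsing_inv]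
    calc (Pᵀ)⁻¹ * Qᵀ * (Q * P⁻¹) = (Pᵀ)⁻¹ * (Qᵀ * Q) * P⁻¹ := by
          simp [Matrix.mul_assoc]
      _ = (Pᵀ)⁻¹ * (Pᵀ * P) * P⁻¹ := by rw [h]
      _ = 1 := by
          rw [← Matrix.mul_assoc, Matrix.nonsing_inv_mul _ (by simpa using hPu),
            Matrix.one_mul, Matrix.mul_nonsing_inv _ hPu]
  -- T is invertible with T⁻¹ = Tᵀ
  have hTdet : IsUnit T.det := tri_invertible hTu hTd
  have hTinv : T⁻¹ = Tᵀ := by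
    rw [Matrix.inv_eq_left_inv horth]
  have hTlow : ∀ i j : Fin q, i < j → T i j = 0 := by
    intro i j hij
    have := tri_inv_tri hTu hTd j i hij
    rw [hTinv] at this
    simpa using this
  have hT1 : T = 1 := by
    ext i j
    rcases lt_trichotomy i j with h' | h' | h'
    · rw [hTlow i j h', Matrix.one_apply_ne h'.ne]
    · subst h'
      have : (Tᵀ * T) i i = 1 := by rw [horth]; simp
      rw [Matrix.mul_apply] at this
      have hsum : ∑ k, Tᵀ i k * T k i = T i i * T i i := by
        refine Finset.sum_eq_single i (fun k _ hk => ?_) (by simp)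
        rcases lt_or_gt_of_ne hk with h | h
        · rw [hTlow k i h]; simp
        · rw [hTu k i h]; simp [Matrix.transpose_apply]
      rw [hsum] at this
      have := hTd i
      have h11 : T i i = 1 := by nlinarith
      rw [h11]; simp
    · rw [hTu i j h', Matrix.one_apply_ne (ne_of_gt h')]
  have : Q = T * P := by
    rw [hT, Matrix.mul_assoc, Matrix.nonsing_inv_mul _ hPu, Matrix.mul_one]
  rw [this, hT1, Matrix.one_mul]

end Aux

/-- Cholesky-factor update of the beta-Bartlett backward sampler: if
Φ = (U*P_t)ᵀ(U*P_t) with P_t, P_{t-1}, U* upper-triangular with positive diagonals,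
b > 0, and U*P_tP_{t-1}⁻¹ has positive diagonal, then
uchol(b·(P_{t-1}⁻¹)ᵀ Φ P_{t-1}⁻¹) = √b · U* P_t P_{t-1}⁻¹. -/
theorem uchol_backward_update (q : ℕ) (b : ℝ) (hb : 0 < b)
    (Pt Ptm Ustar : Matrix (Fin q) (Fin q) ℝ)
    (hPt : ∀ i j : Fin q, j < i → Pt i j = 0) (hPtd : ∀ i : Fin q, 0 < Pt i i)
    (hPm : ∀ i j : Fin q, j < i → Ptm i j = 0) (hPmd : ∀ i : Fin q, 0 < Ptm i i)
    (hU : ∀ i j : Fin q, j < i → Ustar i j = 0) (hUd : ∀ i : Fin q, 0 < Ustar i i)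
    (Φ : Matrix (Fin q) (Fin q) ℝ) (hΦ : Φ = (Ustar * Pt)ᵀ * (Ustar * Pt))
    (hprod : ∀ i : Fin q, 0 < (Ustar * Pt * Ptm⁻¹) i i) :
    uchol (b • ((Ptm⁻¹)ᵀ * Φ * Ptm⁻¹)) = Real.sqrt b • (Ustar * Pt * Ptm⁻¹) := by
  have hsb : 0 < Real.sqrt b := Real.sqrt_pos.mpr hb
  set R : Matrix (Fin q) (Fin q) ℝ := Real.sqrt b • (Ustar * Pt * Ptm⁻¹) with hR
  have hMu : ∀ i j : Fin q, j < i → (Ustar * Pt * Ptm⁻¹) i j = 0 := by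
    intro i j hij
    exact (BlockTriangular.mul
      (BlockTriangular.mul (fun i j h => hU i j h) (fun i j h => hPt i j h))
      (fun i j h => tri_inv_tri hPm hPmd i j h)) hij
  have hRu : ∀ i j : Fin q, j < i → R i j = 0 := by
    intro i j hij
    simp [hR, Matrix.smul_apply, hMu i j hij]
  have hRd : ∀ i : Fin q, 0 < R i i := by
    intro i
    simpa [hR, Matrix.smul_apply] using mul_pos hsb (hprod i)
  have hGram : Rᵀ * R = b • ((Ptm⁻¹)ᵀ * Φ * Ptm⁻¹) := by
    rw [hR, Matrix.transpose_smul, Matrix.smul_mul, Matrix.mul_smul, smul_smul,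
      Real.mul_self_sqrt hb.le]
    congr 1
    rw [hΦ]
    simp only [Matrix.transpose_mul, Matrix.mul_assoc]
  have hex : ∃ P : Matrix (Fin q) (Fin q) ℝ,
      (∀ i j : Fin q, j < i → P i j = 0) ∧ (∀ i : Fin q, 0 < P i i) ∧
        Pᵀ * P = b • ((Ptm⁻¹)ᵀ * Φ * Ptm⁻¹) := ⟨R, hRu, hRd, hGram⟩
  rw [uchol, dif_pos hex]
  obtain ⟨h1, h2, h3⟩ := hex.choose_spec
  exact chol_unique h1 h2 hRu hRd (h3.trans hGram.symm)
end
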